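/- For all real numbers a, b ≥ 0 and every natural number k, the entire function φ_k defined by φ_k(α) = ∑_{j≥k} α^{j-k}/j! satisfies φ_k(a+b) ≤ (1/2)·φ_k(2a) + (1/2)·φ_k(2b). -/

import Mathlib

/-!
Every term `(a + b) ^ m = 2 ^ m ((a + b) / 2) ^ m` is bounded, by convexity of `x ↦ x ^ m` on
`[0, ∞)`, by the average of `(2a) ^ m` and `(2b) ^ m`. Since `φ_k` is a power series with
nonnegative coefficients `1 / (m + k)!`, summing these termwise bounds gives the inequality.
-/

open Nat

lemma add_pow_le_half_two_mul_pow_add {a b : ℝ} (ha : 0 ≤ a) (hb : 0 ≤ b) (m : ℕ) :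
    (a + b) ^ m ≤ 1 / 2 * (2 * a) ^ m + 1 / 2 * (2 * b) ^ m := by
  have hmid : (1 / 2 * a + 1 / 2 * b) ^ m ≤ 1 / 2 * a ^ m + 1 / 2 * b ^ m :=
    (convexOn_pow m).2 ha hb (by norm_num) (by norm_num) (by norm_num)
  calc (a + b) ^ m = 2 ^ m * (1 / 2 * a + 1 / 2 * b) ^ m := by rw [← mul_pow]; ring
    _ ≤ 2 ^ m * (1 / 2 * a ^ m + 1 / 2 * b ^ m) := by gcongr
    _ = 1 / 2 * (2 * a) ^ m + 1 / 2 * (2 * b) ^ m := by ring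

lemma tsum_mul_add_pow_le {c : ℕ → ℝ} (hc : ∀ m, 0 ≤ c m) {a b : ℝ}
    (ha : 0 ≤ a) (hb : 0 ≤ b) (hsa : Summable fun m ↦ c m * (2 * a) ^ m)
    (hsb : Summable fun m ↦ c m * (2 * b) ^ m) :
    ∑' m, c m * (a + b) ^ m ≤
      1 / 2 * ∑' m, c m * (2 * a) ^ m + 1 / 2 * ∑' m, c m * (2 * b) ^ m := by
  have hsum : Summable fun m ↦ 1 / 2 * (c m * (2 * a) ^ m) + 1 / 2 * (c m * (2 * b) ^ m) :=
    (hsa.mul_left _).add (hsb.mul_left _)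
  have hterm (m : ℕ) :
      c m * (a + b) ^ m ≤ 1 / 2 * (c m * (2 * a) ^ m) + 1 / 2 * (c m * (2 * b) ^ m) := by
    have := mul_le_mul_of_nonneg_left (add_pow_le_half_two_mul_pow_add ha hb m) (hc m)
    linarith
  have hlhs : Summable fun m ↦ c m * (a + b) ^ m :=
    .of_nonneg_of_le (fun m ↦ by have := hc m; positivity) hterm hsum
  rw [← tsum_mul_left, ← tsum_mul_left, ← (hsa.mul_left _).tsum_add (hsb.mul_left _)]
  exact hlhs.tsum_le_tsum hterm hsum

lemma summable_inv_factorial_add_mul_pow (k : ℕ) (x : ℝ) :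
    Summable fun m ↦ ((m + k)! : ℝ)⁻¹ * x ^ m := by
  refine .of_norm_bounded (Real.summable_pow_div_factorial |x|) fun m ↦ ?_
  rw [norm_mul, norm_inv, Real.norm_natCast, norm_pow, Real.norm_eq_abs, inv_mul_eq_div]
  gcongr
  exact Nat.le_add_right m k

/-- For all real `a, b ≥ 0` and every `k : ℕ`, the function
`φ_k(α) = ∑_{j≥k} α^{j-k}/j!` satisfies `φ_k(a+b) ≤ (1/2)φ_k(2a) + (1/2)φ_k(2b)`.
(Index shifted: `j = m + k`.) -/
theorem stmt0 (k : ℕ) (a b : ℝ) (ha : 0 ≤ a) (hb : 0 ≤ b) :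
    (∑' m : ℕ, (a + b) ^ m / (Nat.factorial (m + k) : ℝ)) ≤
      (1 / 2) * (∑' m : ℕ, (2 * a) ^ m / (Nat.factorial (m + k) : ℝ)) +
      (1 / 2) * (∑' m : ℕ, (2 * b) ^ m / (Nat.factorial (m + k) : ℝ)) := by
  simp only [div_eq_inv_mul (_ ^ _)]
  exact tsum_mul_add_pow_le (fun m ↦ by positivity) ha hb
    (summable_inv_factorial_add_mul_pow k _) (summable_inv_factorial_add_mul_pow k _)
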